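/- With Pecker's polynomials P_m, if m ≥ 2 and all y_i > 0, then P_m(y₁,...,y_m, 0) > 0. -/

import Mathlib

noncomputable def pecker : (m : ℕ) → (Fin (m + 1) → ℝ) → ℝ → ℝ
  | 0, y, t => t - y 0
  | m + 1, y, t =>
      pecker m
        (fun k : Fin (m + 1) =>
          y k.succ * ∑ i : Fin (k.1 + 1), y ⟨i.1, by have := i.isLt; have := k.isLt; omega⟩)
        ((t - ∑ i, y i) ^ 2)

noncomputable def peckerA : (m : ℕ) → (Fin (m + 1) → ℝ) → ℝ
  | 0, y => y 0
  | m + 1, y =>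
      peckerA m
        (fun k : Fin (m + 1) =>
          y k.succ * ∑ i : Fin (k.1 + 1), y ⟨i.1, by have := i.isLt; have := k.isLt; omega⟩)

/-!
Write `S = y₁ + ⋯ + y_m` and `a_k = y_{k+1}(y₁ + ⋯ + y_k)`. Expanding the square,
`S² = ∑ yᵢ² + 2 ∑ a_k ≥ 2 ∑ a_k`. Hence if `t ≥ 2S` then `(t - S)² ≥ S² ≥ 2 ∑ a_k`: the
new argument again dominates twice the sum of the new (positive) variables, and by induction
we reach `P₁(y, t) = t - y₁ > 0`. For `t ≤ 0`, in particular `t = 0`, the first step works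
as well, because then also `(t - S)² ≥ S²`.
-/

open Finset

noncomputable def peckerCoeff {m : ℕ} (y : Fin (m + 2) → ℝ) : Fin (m + 1) → ℝ :=
  fun k => y k.succ * ∑ i : Fin (k.1 + 1), y ⟨i.1, by omega⟩

theorem pecker_succ (m : ℕ) (y : Fin (m + 2) → ℝ) (t : ℝ) :
    pecker (m + 1) y t = pecker m (peckerCoeff y) ((t - ∑ i, y i) ^ 2) :=
  rfl

theorem sq_sum_range {R : Type*} [CommRing R] (f : ℕ → R) (n : ℕ) :
    (∑ i ∈ range n, f i) ^ 2 =
      ∑ i ∈ range n, f i ^ 2 + 2 * ∑ k ∈ range n, f k * ∑ i ∈ range k, f i := by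
  induction n with
  | zero => simp
  | succ n ih =>
    simp only [sum_range_succ]
    linear_combination ih

theorem two_mul_sum_peckerCoeff_add_sum_sq {m : ℕ} (y : Fin (m + 2) → ℝ) :
    2 * ∑ k, peckerCoeff y k + ∑ i, y i ^ 2 = (∑ i, y i) ^ 2 := by
  set f : ℕ → ℝ := fun j => if h : j < m + 2 then y ⟨j, h⟩ else 0
  have hf : ∀ i : Fin (m + 2), y i = f i := fun i => by simp [f]
  have hcoeff : ∑ k, peckerCoeff y k = ∑ k ∈ range (m + 2), f k * ∑ i ∈ range k, f i := by
    rw [sum_range_succ', range_zero, sum_empty, mul_zero, add_zero,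
      ← Fin.sum_univ_eq_sum_range (fun k => f (k + 1) * ∑ i ∈ range (k + 1), f i)]
    refine sum_congr rfl fun k _ => ?_
    rw [peckerCoeff, hf, Fin.val_succ, ← Fin.sum_univ_eq_sum_range]
    simp only [hf]
  simp only [hf]
  rw [Fin.sum_univ_eq_sum_range (fun i => f i ^ 2), Fin.sum_univ_eq_sum_range f, hcoeff,
    sq_sum_range]
  ring

theorem two_mul_sum_peckerCoeff_le_sq_sum {m : ℕ} (y : Fin (m + 2) → ℝ) :
    2 * ∑ k, peckerCoeff y k ≤ (∑ i, y i) ^ 2 := by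
  have hsq : 0 ≤ ∑ i, y i ^ 2 := sum_nonneg fun i _ => sq_nonneg (y i)
  linarith [two_mul_sum_peckerCoeff_add_sum_sq y]

theorem peckerCoeff_pos {m : ℕ} {y : Fin (m + 2) → ℝ} (hy : ∀ i, 0 < y i) (k : Fin (m + 1)) :
    0 < peckerCoeff y k :=
  mul_pos (hy _) (sum_pos (fun _ _ => hy _) univ_nonempty)

theorem pecker_pos_of_two_mul_sum_le {m : ℕ} {y : Fin (m + 1) → ℝ} (hy : ∀ i, 0 < y i) {t : ℝ}
    (ht : 2 * ∑ i, y i ≤ t) : 0 < pecker m y t := by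
  induction m generalizing t with
  | zero =>
    rw [Fin.sum_univ_one] at ht
    simp only [pecker]
    linarith [hy 0]
  | succ m ih =>
    have hS : 0 ≤ ∑ i, y i := sum_nonneg fun i _ => (hy i).le
    rw [pecker_succ]
    refine ih (peckerCoeff_pos hy) ?_
    calc 2 * ∑ k, peckerCoeff y k ≤ (∑ i, y i) ^ 2 := two_mul_sum_peckerCoeff_le_sq_sum y
      _ ≤ (t - ∑ i, y i) ^ 2 := pow_le_pow_left₀ hS (by linarith) 2

theorem pecker_succ_pos_of_nonpos {m : ℕ} {y : Fin (m + 2) → ℝ} (hy : ∀ i, 0 < y i) {t : ℝ}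
    (ht : t ≤ 0) : 0 < pecker (m + 1) y t := by
  have hS : 0 ≤ ∑ i, y i := sum_nonneg fun i _ => (hy i).le
  rw [pecker_succ]
  refine pecker_pos_of_two_mul_sum_le (peckerCoeff_pos hy) ?_
  calc 2 * ∑ k, peckerCoeff y k ≤ (∑ i, y i) ^ 2 := two_mul_sum_peckerCoeff_le_sq_sum y
    _ ≤ (∑ i, y i - t) ^ 2 := pow_le_pow_left₀ hS (by linarith) 2
    _ = (t - ∑ i, y i) ^ 2 := by ring

theorem stmt15 (m : ℕ) (hm : 1 ≤ m) (y : Fin (m + 1) → ℝ) (hy : ∀ i, 0 < y i) :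
    0 < pecker m y 0 := by
  obtain ⟨n, rfl⟩ : ∃ n, m = n + 1 := ⟨m - 1, by omega⟩
  exact pecker_succ_pos_of_nonpos hy le_rfl
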